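/- Let g(θ) = exp(−1/(1+cos θ)²)·sin²(tan(θ/2)) extended by 0 at θ ∈ π + 2πℤ, and let Ω = {(g(θ)cos θ, g(θ)sin θ) : θ ∈ [0,2π)}. Then Ω is a compact connected subset of ℝ² containing the origin, and Ω \ {0} has countably infinitely many connected components (the open petals). -/

import Mathlib

open Real

open Classical in
noncomputable def g (θ : ℝ) : ℝ :=
  if ∃ k : ℤ, θ = π + 2 * π * k then 0
  else Real.exp (-(1 / (1 + Real.cos θ) ^ 2)) * Real.sin (Real.tan (θ / 2)) ^ 2


noncomputable def Ω : Set (ℝ × ℝ) :=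
  {p : ℝ × ℝ | ∃ θ ∈ Set.Ico (0 : ℝ) (2 * π), p = (g θ * Real.cos θ, g θ * Real.sin θ)}

/-!
Since `g θ = expNegInvGlue ((1 + cos θ) ^ 2) * sin (tan (θ / 2)) ^ 2`, the factor in front of the
bounded, discontinuous `sin (tan (θ / 2)) ^ 2` vanishes continuously where `cos θ = -1`, so
`g` is continuous and `Ω` is the image of `[-π, π]` under the continuous curve
`θ ↦ (g θ cos θ, g θ sin θ)`. On `(-π, π)` we have `g θ > 0` exactly on the petals
`(2 arctan (k π), 2 arctan ((k + 1) π))`, `k ∈ ℤ`, and there the curve is injective (polar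
coordinates). The image of a petal is connected, and it is open in `Ω \ {0}`: its complement there
is the image of the compact set `[-π, π] \ petal`. Hence these images are exactly the connected
components of `Ω \ {0}`, which are indexed by `ℤ`.
-/

open Set Topology Function

theorem ConnectedComponents.nonempty_equiv_of_isOpen_partition {X ι : Type*}
    [TopologicalSpace X] {P : ι → Set X} (hopen : ∀ i, IsOpen (P i))
    (hconn : ∀ i, IsConnected (P i)) (hdisj : Pairwise (Disjoint on P))
    (hcover : ⋃ i, P i = univ) : Nonempty (ι ≃ ConnectedComponents X) := by
  choose x hx using fun i => (hconn i).nonempty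
  have hclopen (i : ι) : IsClopen (P i) := by
    refine ⟨⟨?_⟩, hopen i⟩
    have hcompl : (P i)ᶜ = ⋃ (j) (_ : j ≠ i), P j := by
      ext y
      obtain ⟨j, hj⟩ := iUnion_eq_univ_iff.1 hcover y
      simp only [mem_compl_iff, mem_iUnion, exists_prop]
      exact ⟨fun hy => ⟨j, fun hji => hy (hji ▸ hj), hj⟩,
        fun ⟨k, hki, hk⟩ hy => (hdisj hki).ne_of_mem hk hy rfl⟩
    rw [hcompl]
    exact isOpen_biUnion fun j _ => hopen j
  have hcomp (i : ι) : connectedComponent (x i) = P i :=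
    ((hclopen i).connectedComponent_subset (hx i)).antisymm
      ((hconn i).isPreconnected.subset_connectedComponent (hx i))
  refine ⟨.ofBijective (fun i => ConnectedComponents.mk (x i)) ⟨fun i j hij => ?_, fun c => ?_⟩⟩
  · have hPij : P i = P j := by
      rw [← hcomp, ← hcomp]; exact ConnectedComponents.coe_eq_coe.1 hij
    by_contra hne
    exact (hdisj hne).ne_of_mem (hx i) (hPij ▸ hx i) rfl
  · obtain ⟨y, rfl⟩ := ConnectedComponents.surjective_coe c
    obtain ⟨i, hi⟩ := iUnion_eq_univ_iff.1 hcover y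
    exact ⟨i, (ConnectedComponents.coe_eq_coe'.2 ((hcomp i).symm ▸ hi)).symm⟩

lemma g_eq_expNegInvGlue (θ : ℝ) :
    g θ = expNegInvGlue ((1 + cos θ) ^ 2) * sin (tan (θ / 2)) ^ 2 := by
  have hexc : (∃ k : ℤ, θ = π + 2 * π * k) ↔ cos θ = -1 := by
    rw [cos_eq_neg_one_iff]
    exact exists_congr fun k => ⟨fun h => by rw [h]; ring, fun h => by rw [← h]; ring⟩
  by_cases h : cos θ = -1
  · rw [g, if_pos (hexc.2 h), h]
    simp
  · have hpos : 0 < (1 + cos θ) ^ 2 := by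
      have : 1 + cos θ ≠ 0 := fun h' => h (by linarith)
      positivity
    rw [g, if_neg (mt hexc.1 h), expNegInvGlue, if_neg hpos.not_ge, one_div]

lemma g_nonneg (θ : ℝ) : 0 ≤ g θ := by
  rw [g_eq_expNegInvGlue]
  exact mul_nonneg (expNegInvGlue.nonneg _) (sq_nonneg _)

lemma g_pos_iff (θ : ℝ) : 0 < g θ ↔ cos θ ≠ -1 ∧ sin (tan (θ / 2)) ≠ 0 := by
  have hcos : 0 < (1 + cos θ) ^ 2 ↔ cos θ ≠ -1 := by
    rw [sq_pos_iff, Ne, Ne, ← add_eq_zero_iff_eq_neg']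
  rw [(g_nonneg θ).lt_iff_ne', g_eq_expNegInvGlue, ne_eq, mul_eq_zero, not_or,
    expNegInvGlue.zero_iff_nonpos, not_le, hcos, pow_eq_zero_iff two_ne_zero]

lemma g_periodic : Periodic g (2 * π) := by
  intro θ
  rw [g_eq_expNegInvGlue, g_eq_expNegInvGlue, cos_add_two_pi, add_div,
    show 2 * π / 2 = π by ring, tan_periodic]

lemma continuous_g : Continuous g := by
  have hglue : Continuous fun θ => expNegInvGlue ((1 + cos θ) ^ 2) :=
    (expNegInvGlue.contDiff (n := 0)).continuous.comp (by fun_prop)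
  rw [funext g_eq_expNegInvGlue, continuous_iff_continuousAt]
  intro θ
  by_cases h : cos θ = -1
  · have hzero : expNegInvGlue ((1 + cos θ) ^ 2) = 0 := by simp [h]
    rw [ContinuousAt, hzero, zero_mul]
    refine (hzero ▸ hglue.tendsto θ).zero_mul_isBoundedUnder_le ⟨1, Filter.eventually_map.2 ?_⟩
    filter_upwards with φ
    simpa using sin_sq_le_one (tan (φ / 2))
  · have hcos : cos (θ / 2) ≠ 0 := by
      intro h0
      apply h
      rw [show θ = 2 * (θ / 2) by ring, cos_two_mul, h0]
      ring
    have htan : ContinuousAt (fun φ => tan (φ / 2)) θ :=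
      ContinuousAt.comp (f := (· / 2)) (continuousAt_tan.2 hcos) (by fun_prop)
    exact hglue.continuousAt.mul ((continuous_sin.continuousAt.comp htan).pow 2)

lemma g_pos_iff_of_mem_Ioo {θ : ℝ} (hθ : θ ∈ Ioo (-π) π) : 0 < g θ ↔ sin (tan (θ / 2)) ≠ 0 := by
  have hcos : cos θ ≠ -1 := by
    have : 0 < cos (θ / 2) := cos_pos_of_mem_Ioo ⟨by linarith [hθ.1], by linarith [hθ.2]⟩
    rw [show θ = 2 * (θ / 2) by ring, cos_two_mul]
    nlinarith
  rw [g_pos_iff, and_iff_right hcos]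

lemma floor_div_pi_eq {t : ℝ} {k : ℤ} (h : t ∈ Ioo (k * π) ((k + 1) * π)) : ⌊t / π⌋ = k := by
  rw [Int.floor_eq_iff, le_div_iff₀ pi_pos, div_lt_iff₀ pi_pos]
  exact ⟨h.1.le, h.2⟩

lemma sin_ne_zero_iff_exists_mem_Ioo {t : ℝ} :
    sin t ≠ 0 ↔ ∃ k : ℤ, t ∈ Ioo (k * π) ((k + 1) * π) := by
  constructor
  · intro h
    refine ⟨⌊t / π⌋, lt_of_le_of_ne ?_ (sin_ne_zero_iff.1 h _), ?_⟩
    · exact (le_div_iff₀ pi_pos).1 (Int.floor_le _)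
    · exact (div_lt_iff₀ pi_pos).1 (Int.lt_floor_add_one _)
  · rintro ⟨k, hk⟩
    refine sin_ne_zero_iff.2 fun n hn => ?_
    have hkn := floor_div_pi_eq hk
    rw [← hn, mul_div_cancel_right₀ _ pi_ne_zero, Int.floor_intCast] at hkn
    subst hkn
    exact hk.1.ne hn

/-- The `k`-th petal, on which `tan (θ / 2)` runs through `(k π, (k + 1) π)`. -/
noncomputable def petal (k : ℤ) : Set ℝ := Ioo (2 * arctan (k * π)) (2 * arctan ((k + 1) * π))

lemma petal_subset_Ioo (k : ℤ) : petal k ⊆ Ioo (-π) π :=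
  Ioo_subset_Ioo (by linarith [neg_pi_div_two_lt_arctan (k * π)])
    (by linarith [arctan_lt_pi_div_two ((k + 1) * π)])

lemma isConnected_petal (k : ℤ) : IsConnected (petal k) := by
  refine isConnected_Ioo (mul_lt_mul_of_pos_left (arctan_strictMono ?_) two_pos)
  exact mul_lt_mul_of_pos_right (lt_add_one _) pi_pos

lemma mem_petal_iff {θ : ℝ} {k : ℤ} (hθ : θ ∈ Ioo (-π) π) :
    θ ∈ petal k ↔ tan (θ / 2) ∈ Ioo (k * π) ((k + 1) * π) := by
  have harctan : arctan (tan (θ / 2)) = θ / 2 :=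
    arctan_tan (by linarith [hθ.1]) (by linarith [hθ.2])
  rw [petal, mem_Ioo, mem_Ioo, ← arctan_strictMono.lt_iff_lt (a := (k : ℝ) * π),
    ← arctan_strictMono.lt_iff_lt (b := ((k : ℝ) + 1) * π), harctan]
  constructor <;> rintro ⟨h₁, h₂⟩ <;> constructor <;> linarith

lemma pairwise_disjoint_petal : Pairwise (Disjoint on petal) := by
  intro j k hjk
  refine disjoint_left.2 fun θ hj hk => hjk ?_
  have hθ := petal_subset_Ioo j hj
  rw [← floor_div_pi_eq ((mem_petal_iff hθ).1 hj), floor_div_pi_eq ((mem_petal_iff hθ).1 hk)]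

lemma g_pos_iff_exists_mem_petal {θ : ℝ} (hθ : θ ∈ Icc (-π) π) :
    0 < g θ ↔ ∃ k, θ ∈ petal k := by
  rcases eq_endpoints_or_mem_Ioo_of_mem_Icc hθ with rfl | rfl | hθ
  · exact iff_of_false (by simp [g_pos_iff]) fun ⟨k, hk⟩ => lt_irrefl _ (petal_subset_Ioo k hk).1
  · exact iff_of_false (by simp [g_pos_iff]) fun ⟨k, hk⟩ => lt_irrefl _ (petal_subset_Ioo k hk).2
  · simp only [g_pos_iff_of_mem_Ioo hθ, sin_ne_zero_iff_exists_mem_Ioo, mem_petal_iff hθ]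

noncomputable def polarCurve (θ : ℝ) : ℝ × ℝ := polarCoord.symm (g θ, θ)

lemma continuous_polarCurve : Continuous polarCurve :=
  (continuous_g.mul continuous_cos).prodMk (continuous_g.mul continuous_sin)

lemma polarCurve_periodic : Periodic polarCurve (2 * π) := by
  intro θ
  simp only [polarCurve, polarCoord_symm_apply, g_periodic θ, cos_add_two_pi, sin_add_two_pi]

lemma polarCurve_eq_zero_iff (θ : ℝ) : polarCurve θ = (0, 0) ↔ g θ = 0 := by
  simp only [polarCurve, polarCoord_symm_apply, Prod.mk.injEq, mul_eq_zero]
  constructor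
  · rintro ⟨h₁ | h₁, h₂ | h₂⟩ <;> try assumption
    exact absurd (sin_sq_add_cos_sq θ) (by simp [h₁, h₂])
  · exact fun h => ⟨Or.inl h, Or.inl h⟩

lemma polarCurve_ne_zero_iff {θ : ℝ} (hθ : θ ∈ Icc (-π) π) :
    polarCurve θ ≠ (0, 0) ↔ ∃ k, θ ∈ petal k := by
  rw [Ne, polarCurve_eq_zero_iff, ← g_pos_iff_exists_mem_petal hθ, (g_nonneg θ).lt_iff_ne', Ne]

lemma polarCurve_injOn : InjOn polarCurve (⋃ k, petal k) := by
  have hmem {θ : ℝ} (hθ : θ ∈ ⋃ k, petal k) : (g θ, θ) ∈ polarCoord.symm.source := by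
    obtain ⟨k, hk⟩ := mem_iUnion.1 hθ
    have hIoo := petal_subset_Ioo k hk
    exact ⟨(g_pos_iff_exists_mem_petal (Ioo_subset_Icc_self hIoo)).2 ⟨k, hk⟩, hIoo⟩
  exact fun θ hθ φ hφ h => congrArg Prod.snd (polarCoord.symm.injOn (hmem hθ) (hmem hφ) h)

lemma Ω_eq_range : Ω = range polarCurve := by
  ext p
  constructor
  · rintro ⟨θ, -, rfl⟩
    exact ⟨θ, rfl⟩
  · rintro ⟨θ, rfl⟩
    obtain ⟨φ, hφ, h⟩ := polarCurve_periodic.exists_mem_Ico₀ two_pi_pos θ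
    exact ⟨φ, hφ, h⟩

lemma Ω_eq_image_Icc : Ω = polarCurve '' Icc (-π) π := by
  rw [Ω_eq_range, ← polarCurve_periodic.image_Icc two_pi_pos (-π)]
  ring_nf

lemma image_petal_eq (k : ℤ) :
    polarCurve '' petal k = (Ω \ {(0, 0)}) ∩ (polarCurve '' (Icc (-π) π \ petal k))ᶜ := by
  ext p
  constructor
  · rintro ⟨θ, hθ, rfl⟩
    have hne : polarCurve θ ≠ (0, 0) :=
      (polarCurve_ne_zero_iff (Ioo_subset_Icc_self (petal_subset_Ioo k hθ))).2 ⟨k, hθ⟩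
    refine ⟨⟨Ω_eq_range ▸ mem_range_self θ, hne⟩, ?_⟩
    rintro ⟨φ, ⟨hφ, hφk⟩, h⟩
    have hφ' : φ ∈ ⋃ k, petal k := mem_iUnion.2 ((polarCurve_ne_zero_iff hφ).1 (h ▸ hne))
    exact hφk (polarCurve_injOn hφ' (mem_iUnion.2 ⟨k, hθ⟩) h ▸ hθ)
  · rintro ⟨⟨hp, -⟩, hp'⟩
    rw [Ω_eq_image_Icc] at hp
    obtain ⟨θ, hθ, rfl⟩ := hp
    by_contra hθk
    exact hp' ⟨θ, ⟨hθ, fun h => hθk (mem_image_of_mem _ h)⟩, rfl⟩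

lemma nonempty_equiv_connectedComponents :
    Nonempty (ℤ ≃ ConnectedComponents ↥(Ω \ {((0, 0) : ℝ × ℝ)})) := by
  refine ConnectedComponents.nonempty_equiv_of_isOpen_partition
    (P := fun k => (↑) ⁻¹' (polarCurve '' petal k)) (fun k => ?_) (fun k => ?_) ?_ ?_
  · rw [image_petal_eq, Subtype.preimage_coe_self_inter]
    exact ((isCompact_Icc.diff isOpen_Ioo).image continuous_polarCurve).isClosed.isOpen_compl
      |>.preimage continuous_subtype_val
  · have hsub : polarCurve '' petal k ⊆ Ω \ {(0, 0)} := image_petal_eq k ▸ inter_subset_left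
    have hconn := (isConnected_petal k).image _ continuous_polarCurve.continuousOn
    rw [← inter_eq_self_of_subset_right hsub, ← Subtype.image_preimage_coe] at hconn
    exact ⟨hconn.nonempty.of_image, IsInducing.subtypeVal.isPreconnected_image.1 hconn.2⟩
  · intro j k hjk
    exact ((pairwise_disjoint_petal hjk).image polarCurve_injOn (subset_iUnion _ j)
      (subset_iUnion _ k)).preimage _
  · refine eq_univ_of_forall fun ⟨p, hp, hp0⟩ => ?_
    rw [Ω_eq_image_Icc] at hp
    obtain ⟨θ, hθ, rfl⟩ := hp
    obtain ⟨k, hk⟩ := (polarCurve_ne_zero_iff hθ).1 hp0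
    exact mem_iUnion.2 ⟨k, θ, hk, rfl⟩

theorem stmt_17 :
    IsCompact Ω ∧ IsConnected Ω ∧ ((0, 0) : ℝ × ℝ) ∈ Ω ∧
    Countable (ConnectedComponents ↥(Ω \ {((0, 0) : ℝ × ℝ)})) ∧
    Infinite (ConnectedComponents ↥(Ω \ {((0, 0) : ℝ × ℝ)})) := by
  obtain ⟨e⟩ := nonempty_equiv_connectedComponents
  refine ⟨?_, ?_, ?_, Countable.of_equiv ℤ e, Infinite.of_injective e e.injective⟩
  · exact Ω_eq_image_Icc ▸ isCompact_Icc.image continuous_polarCurve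
  · exact Ω_eq_image_Icc ▸ (isConnected_Icc (by linarith [pi_pos])).image _
      continuous_polarCurve.continuousOn
  · exact Ω_eq_range ▸ ⟨π, (polarCurve_eq_zero_iff π).2 (by simp [g_eq_expNegInvGlue])⟩
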